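/- arXiv:2311.13377 — 2 statements merged into one kernel-verified Lean document; each statement's English description precedes it below -/
import Mathlib

section
/- A strongly connected tournament T with diameter two contains at most 3 critical vertices. Moreover, for each c with 1 ≤ c ≤ 3, T contains exactly c critical vertices if and only if T is obtained from the cyclic triple Δ by replacing precisely 3−c of its three vertices by strongly connected tournaments of order at least 3 with diameter 2. -/
/-!
If `w` is critical, `T - w` splits into nonempty parts `A ⇒ B`. Every `b ∈ B` reaches every
`a ∈ A` in two steps, and since `a → b` the middle vertex can only be `w`; hence `B → w → A`
and `T` is the composition `Δ[A, B, {w}]`. In any composition `Δ[T₀, T₁, T₂]` a vertex is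
critical exactly when its part is a singleton: deleting a singleton part breaks the cycle of
parts, while deleting a vertex from a larger part leaves a composition, which is strong. A
two-step path between two vertices of one part never leaves that part, so each non-singleton
part has diameter two itself, and as a strong tournament it cannot have order two.
-/

/-- A tournament on a vertex type `V`: every ordered pair of distinct vertices
carries exactly one arc. `adj v w = true` means there is an arc from `v` to `w`
(`v` dominates `w`). -/
structure Tournament (V : Type*) where
  adj : V → V → Bool
  irrefl : ∀ v, adj v v = false
  compl : ∀ v w, v ≠ w → adj v w = !adj w v

namespace Tournament

variable {V : Type*} {W : Type*}

/-- The subtournament induced on a set of vertices. -/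
def restrict (T : Tournament V) (s : Set V) : Tournament s where
  adj a b := T.adj a b
  irrefl a := T.irrefl a
  compl a b h := T.compl a b (fun hab => h (Subtype.ext hab))

/-- A tournament is strongly connected if every vertex can be reached from
every other one by a directed path. -/
def Strong (T : Tournament V) : Prop :=
  ∀ v w : V, Relation.ReflTransGen (fun a b => T.adj a b = true) v w

/-- A vertex of a tournament is non-critical if deleting it leaves a strongly
connected tournament. -/
def Noncritical (T : Tournament V) (w : V) : Prop :=
  (T.restrict {x | x ≠ w}).Strong

/-- There is a directed walk of length `k` from `v` to `w`. -/
def HasWalk (T : Tournament V) (v w : V) (k : ℕ) : Prop :=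
  ∃ f : Fin (k + 1) → V, f 0 = v ∧ f (Fin.last k) = w ∧
    ∀ i : Fin k, T.adj (f i.castSucc) (f i.succ) = true

/-- The distance from `v` to `w`: the length of a shortest directed path. -/
noncomputable def dist (T : Tournament V) (v w : V) : ℕ :=
  sInf {k | T.HasWalk v w k}

/-- The diameter: the maximum distance over ordered pairs of distinct vertices. -/
noncomputable def diam (T : Tournament V) : ℕ :=
  sSup {m | ∃ v w : V, v ≠ w ∧ T.dist v w = m}

/-- Cyclic successor on `Fin ℓ`. -/
def cyc {ℓ : ℕ} (i : Fin ℓ) : Fin ℓ :=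
  if h : i.val + 1 < ℓ then ⟨i.val + 1, h⟩ else ⟨0, i.pos⟩

/-- The number of circuits (directed cycles through distinct vertices) of
length `ℓ` in `T`.  Each circuit is represented by exactly `ℓ` cyclic
parametrisations, whence the division. -/
noncomputable def circCount (T : Tournament V) (ℓ : ℕ) : ℕ :=
  Nat.card {f : Fin ℓ → V // Function.Injective f ∧
    ∀ i : Fin ℓ, T.adj (f i) (f (cyc i)) = true} / ℓ

/-- The number of circuits of length `ℓ` in `T` passing through the vertex `w`. -/
noncomputable def circCountAt (T : Tournament V) (ℓ : ℕ) (w : V) : ℕ :=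
  Nat.card {f : Fin ℓ → V // Function.Injective f ∧
    (∀ i : Fin ℓ, T.adj (f i) (f (cyc i)) = true) ∧ ∃ i, f i = w} / ℓ

/-- The number of strongly connected subtournaments of order `ℓ` in `T`. -/
noncomputable def strongSubCount (T : Tournament V) (ℓ : ℕ) : ℕ :=
  Nat.card {s : Finset V // s.card = ℓ ∧ (T.restrict ↑s).Strong}

/-- Isomorphism of tournaments. -/
def Iso (T : Tournament V) (S : Tournament W) : Prop :=
  ∃ e : V ≃ W, ∀ a b : V, T.adj a b = S.adj (e a) (e b)

/-- Build a tournament from the function `f` recording which arcs point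
"upwards" with respect to a linear order on the vertices. -/
def ofFn [LinearOrder V] (f : V → V → Bool) : Tournament V where
  adj u v := if u < v then f u v else if v < u then !f v u else false
  irrefl v := by simp
  compl u v h := by
    rcases lt_trichotomy u v with h1 | h1 | h1
    · simp [h1, not_lt_of_gt h1]
    · exact absurd h1 h
    · simp [h1, not_lt_of_gt h1]

/-- The tournament `T_{n-1,n}(z_0,…,z_{n-1})`: `z_i → z_{i+1}` and `z_j → z_i`
for `j > i + 1`. -/
def lineT (n : ℕ) : Tournament (Fin n) :=
  ofFn fun i j => decide (j.val = i.val + 1)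

end Tournament

namespace Tournament

variable {V α : Type*} {T : Tournament V} {u v w : V}

lemma ne_of_adj (h : T.adj v w = true) : v ≠ w := by
  rintro rfl; simp [T.irrefl] at h

lemma adj_eq_false_of_adj (h : T.adj v w = true) : T.adj w v = false := by
  simpa [h] using T.compl w v (ne_of_adj h).symm

lemma adj_or_adj (T : Tournament V) (h : v ≠ w) : T.adj v w = true ∨ T.adj w v = true := by
  cases hwv : T.adj w v <;> simp_all [T.compl v w h]

lemma hasWalk_zero_iff : T.HasWalk v w 0 ↔ v = w :=
  ⟨fun ⟨_, h0, hl, _⟩ => h0 ▸ hl ▸ rfl, fun h => ⟨fun _ => v, rfl, h, fun i => i.elim0⟩⟩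

lemma hasWalk_one_iff : T.HasWalk v w 1 ↔ T.adj v w = true :=
  ⟨fun ⟨_, h0, hl, hs⟩ => h0 ▸ hl ▸ hs 0,
    fun h => ⟨![v, w], rfl, rfl, fun i => by fin_cases i; exact h⟩⟩

lemma hasWalk_two_iff :
    T.HasWalk v w 2 ↔ ∃ z, T.adj v z = true ∧ T.adj z w = true :=
  ⟨fun ⟨f, h0, hl, hs⟩ => ⟨f 1, h0 ▸ hs 0, hl ▸ hs 1⟩,
    fun ⟨z, hvz, hzw⟩ => ⟨![v, z, w], rfl, rfl, fun i => by fin_cases i <;> assumption⟩⟩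

lemma HasWalk.snoc {k : ℕ} (h : T.HasWalk u v k) (hvw : T.adj v w = true) :
    T.HasWalk u w (k + 1) := by
  obtain ⟨f, h0, hl, hs⟩ := h
  refine ⟨Fin.snoc f w, by simpa using h0, by simp, Fin.lastCases ?_ fun i => ?_⟩
  · simpa [hl] using hvw
  · rw [Fin.succ_castSucc, Fin.snoc_castSucc, Fin.snoc_castSucc]; exact hs i

lemma hasWalk_of_reflTransGen (h : Relation.ReflTransGen (fun a b => T.adj a b = true) v w) :
    ∃ k, T.HasWalk v w k := by
  induction h with
  | refl => exact ⟨0, hasWalk_zero_iff.2 rfl⟩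
  | tail _ hbc ih => obtain ⟨k, hk⟩ := ih; exact ⟨k + 1, hk.snoc hbc⟩

lemma Strong.hasWalk_dist (hT : T.Strong) (v w : V) : T.HasWalk v w (T.dist v w) :=
  Nat.sInf_mem (hasWalk_of_reflTransGen (hT v w))

lemma dist_le_diam [Finite V] (T : Tournament V) (h : v ≠ w) : T.dist v w ≤ T.diam := by
  refine le_csSup ((Set.finite_range fun p : V × V => T.dist p.1 p.2).subset ?_).bddAbove
    ⟨v, w, h, rfl⟩
  rintro _ ⟨a, b, -, rfl⟩
  exact ⟨(a, b), rfl⟩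

def DistLeTwo (T : Tournament V) : Prop :=
  ∀ v w, v ≠ w → T.adj v w = true ∨ ∃ z, T.adj v z = true ∧ T.adj z w = true

lemma Strong.distLeTwo_of_diam_le_two [Finite V] (hT : T.Strong) (hdiam : T.diam ≤ 2) :
    T.DistLeTwo := by
  intro v w hvw
  have hwalk := hT.hasWalk_dist v w
  have hle := (T.dist_le_diam hvw).trans hdiam
  interval_cases T.dist v w
  · exact absurd (hasWalk_zero_iff.1 hwalk) hvw
  · exact .inl (hasWalk_one_iff.1 hwalk)
  · exact .inr (hasWalk_two_iff.1 hwalk)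

lemma DistLeTwo.strong (hT : T.DistLeTwo) : T.Strong := by
  intro v w
  obtain rfl | hvw := eq_or_ne v w
  · exact .refl
  rcases hT v w hvw with h | ⟨z, hvz, hzw⟩
  · exact .single h
  · exact .tail (.single hvz) hzw

lemma DistLeTwo.dist_le_two (hT : T.DistLeTwo) (h : v ≠ w) : T.dist v w ≤ 2 := by
  rcases hT v w h with h | ⟨z, hvz, hzw⟩
  · exact (Nat.sInf_le (hasWalk_one_iff.2 h)).trans one_le_two
  · exact Nat.sInf_le (hasWalk_two_iff.2 ⟨z, hvz, hzw⟩)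

lemma DistLeTwo.dist_eq_two (hT : T.DistLeTwo) (h : v ≠ w) (hvw : T.adj v w = false) :
    T.dist v w = 2 := by
  refine (hT.dist_le_two h).antisymm (le_csInf ⟨_, (hT.strong.hasWalk_dist v w)⟩ ?_)
  rintro (_ | _ | k) hk
  · exact absurd (hasWalk_zero_iff.1 hk) h
  · simp [hasWalk_one_iff.1 hk] at hvw
  · omega

lemma DistLeTwo.diam_eq_two [Finite V] [Nontrivial V] (hT : T.DistLeTwo) : T.diam = 2 := by
  obtain ⟨x, y, hxy⟩ := exists_pair_ne V
  obtain ⟨v, w, hvw, hfalse⟩ : ∃ v w : V, v ≠ w ∧ T.adj v w = false := by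
    rcases T.adj_or_adj hxy with h | h
    · exact ⟨y, x, hxy.symm, adj_eq_false_of_adj h⟩
    · exact ⟨x, y, hxy, adj_eq_false_of_adj h⟩
  refine IsGreatest.csSup_eq ⟨⟨v, w, hvw, hT.dist_eq_two hvw hfalse⟩, ?_⟩
  rintro _ ⟨a, b, hab, rfl⟩
  exact hT.dist_le_two hab

lemma Strong.exists_adj [Nontrivial V] (hT : T.Strong) (v : V) : ∃ w, T.adj v w = true := by
  obtain ⟨w, hw⟩ := exists_ne v
  rcases Relation.ReflTransGen.cases_head (hT v w) with rfl | ⟨z, hvz, -⟩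
  · exact absurd rfl hw
  · exact ⟨z, hvz⟩

lemma Strong.card_ne_two (hT : T.Strong) : Nat.card V ≠ 2 := by
  intro h
  obtain ⟨x, y, hxy, hV⟩ := Nat.card_eq_two_iff.1 h
  have : Nontrivial V := ⟨⟨x, y, hxy⟩⟩
  have hmem (z : V) : z = x ∨ z = y := by
    simpa using (hV.symm ▸ Set.mem_univ z : z ∈ ({x, y} : Set V))
  obtain ⟨a, hxa⟩ := hT.exists_adj x
  obtain ⟨b, hyb⟩ := hT.exists_adj y
  obtain rfl | rfl := hmem a
  · exact ne_of_adj hxa rfl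
  obtain rfl | rfl := hmem b
  · simp [adj_eq_false_of_adj hxa] at hyb
  · exact ne_of_adj hyb rfl

/-- `T` arises from the cyclic triple `0 → 1 → 2 → 0` by substituting the fibres of `π` for
its vertices. -/
structure IsDeltaComposition (T : Tournament V) (π : V → Fin 3) : Prop where
  surjective : Function.Surjective π
  adj_iff : ∀ a b, π a ≠ π b → (T.adj a b = true ↔ π b = π a + 1)

namespace IsDeltaComposition

variable {π : V → Fin 3}

lemma of_adj (hπ : Function.Surjective π) (h : ∀ a b, π b = π a + 1 → T.adj a b = true) :
    T.IsDeltaComposition π where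
  surjective := hπ
  adj_iff a b hab := by
    refine ⟨fun hadj => ?_, h a b⟩
    by_contra hba
    simp [adj_eq_false_of_adj (h b a (by omega))] at hadj

lemma adj_of_eq_add_one (hπ : T.IsDeltaComposition π) {a b : V} (h : π b = π a + 1) :
    T.adj a b = true :=
  (hπ.adj_iff a b (by omega)).2 h

lemma strong (hπ : T.IsDeltaComposition π) : T.Strong := by
  let R := fun a b => T.adj a b = true
  have reach₁ (a b : V) (h : π b = π a + 1) : Relation.ReflTransGen R a b :=
    .single (hπ.adj_of_eq_add_one h)
  have reach₂ (a b : V) (h : π b = π a + 2) : Relation.ReflTransGen R a b := by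
    obtain ⟨c, hc⟩ := hπ.surjective (π a + 1)
    exact .tail (reach₁ a c hc) (hπ.adj_of_eq_add_one (by omega))
  intro a b
  obtain h | h | h : π b = π a + 1 ∨ π b = π a + 2 ∨ π b = π a := by omega
  · exact reach₁ a b h
  · exact reach₂ a b h
  · obtain ⟨c, hc⟩ := hπ.surjective (π a + 2)
    exact .tail (reach₂ a c hc) (hπ.adj_of_eq_add_one (by omega))

lemma restrict (hπ : T.IsDeltaComposition π) {s : Set V}
    (hs : Function.Surjective (π ∘ Subtype.val : s → Fin 3)) :
    (T.restrict s).IsDeltaComposition (π ∘ Subtype.val) :=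
  ⟨hs, fun a b => hπ.adj_iff a b⟩

lemma noncritical_of_eq_of_ne (hπ : T.IsDeltaComposition π) {x y : V} (hπxy : π y = π x)
    (hxy : y ≠ x) : T.Noncritical x := by
  refine (hπ.restrict fun i => ?_).strong
  obtain ⟨z, rfl⟩ := hπ.surjective i
  by_cases hz : z = x
  · exact ⟨⟨y, hxy⟩, hz ▸ hπxy⟩
  · exact ⟨⟨z, hz⟩, rfl⟩

lemma not_noncritical_of_fiber_eq_singleton (hπ : T.IsDeltaComposition π) {x : V}
    (hx : π ⁻¹' {π x} = {x}) : ¬ T.Noncritical x := by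
  intro hs
  obtain ⟨a, ha⟩ := hπ.surjective (π x + 1)
  obtain ⟨b, hb⟩ := hπ.surjective (π x + 2)
  have hne {c : V} (hc : π c ≠ π x) : c ≠ x := fun h => hc (h ▸ rfl)
  -- the only arcs leaving the fibre of `π x + 2` end at `x`, so `T - x` cannot leave it
  have hstay (c : {y | y ≠ x}) (hbc : Relation.ReflTransGen
      (fun c d => (T.restrict {y | y ≠ x}).adj c d = true) ⟨b, hne (by omega)⟩ c) :
      π c = π x + 2 := by
    induction hbc with
    | refl => exact hb
    | @tail c d _ hcd ih =>
      by_contra hd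
      have hdx : π d = π x := by have := (hπ.adj_iff c d (by omega)).1 hcd; omega
      exact d.2 (hx.subset hdx)
  have : π a = π x + 2 := hstay ⟨a, hne (by omega)⟩ (hs _ _)
  omega

lemma not_noncritical_iff (hπ : T.IsDeltaComposition π) (x : V) :
    ¬ T.Noncritical x ↔ π ⁻¹' {π x} = {x} := by
  refine ⟨fun hx => ?_, hπ.not_noncritical_of_fiber_eq_singleton⟩
  refine Set.eq_singleton_iff_unique_mem.2 ⟨rfl, fun y hy => ?_⟩
  by_contra hyx
  exact hx (hπ.noncritical_of_eq_of_ne hy hyx)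

lemma card_critical_eq_card_singleton_fiber (hπ : T.IsDeltaComposition π) :
    Nat.card {x // ¬ T.Noncritical x} = Nat.card {i : Fin 3 // Nat.card (π ⁻¹' {i}) = 1} := by
  simp only [Nat.card_coe_set_eq, Set.ncard_eq_one, hπ.not_noncritical_iff]
  refine Nat.card_eq_of_bijective (fun x => ⟨π x, x, x.2⟩) ⟨fun x y hxy => ?_, ?_⟩
  · have hyx : (y : V) ∈ π ⁻¹' {π x} := congrArg Subtype.val hxy.symm
    exact Subtype.ext (x.2.subset hyx).symm
  · rintro ⟨i, a, ha⟩
    have hai : π a = i := (ha.symm.subset rfl : a ∈ π ⁻¹' {i})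
    exact ⟨⟨a, hai ▸ ha⟩, Subtype.ext hai⟩

lemma distLeTwo_restrict_fiber (hπ : T.IsDeltaComposition π) (hT : T.DistLeTwo) (i : Fin 3) :
    (T.restrict (π ⁻¹' {i})).DistLeTwo := by
  rintro ⟨x, hx⟩ ⟨y, hy⟩ hxy
  rcases hT x y (fun h => hxy (Subtype.ext h)) with h | ⟨z, hxz, hzy⟩
  · exact .inl h
  refine .inr ⟨⟨z, ?_⟩, hxz, hzy⟩
  simp only [Set.mem_preimage, Set.mem_singleton_iff] at hx hy ⊢
  -- a middle vertex outside the fibre would give `π y = π x + 2`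
  by_contra hz
  have hxz' := (hπ.adj_iff x z (by omega)).1 hxz
  have hzy' := (hπ.adj_iff z y (by omega)).1 hzy
  omega

lemma nontrivial_fiber [Finite V] (hπ : T.IsDeltaComposition π) {i : Fin 3}
    (hi : Nat.card (π ⁻¹' {i}) ≠ 1) : Nontrivial (π ⁻¹' {i}) := by
  obtain ⟨x, hx⟩ := hπ.surjective i
  have : Nonempty (π ⁻¹' {i}) := ⟨⟨x, hx⟩⟩
  have := Nat.card_pos (α := π ⁻¹' {i})
  exact Finite.one_lt_card_iff_nontrivial.1 (by omega)

lemma three_le_card_fiber [Finite V] (hπ : T.IsDeltaComposition π) (hT : T.DistLeTwo)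
    {i : Fin 3} (hi : Nat.card (π ⁻¹' {i}) ≠ 1) : 3 ≤ Nat.card (π ⁻¹' {i}) := by
  have := hπ.nontrivial_fiber hi
  have := Finite.one_lt_card (α := π ⁻¹' {i})
  have := (hπ.distLeTwo_restrict_fiber hT i).strong.card_ne_two
  omega

lemma diam_restrict_fiber [Finite V] (hπ : T.IsDeltaComposition π) (hT : T.DistLeTwo)
    {i : Fin 3} (hi : Nat.card (π ⁻¹' {i}) ≠ 1) : (T.restrict (π ⁻¹' {i})).diam = 2 :=
  have := hπ.nontrivial_fiber hi
  (hπ.distLeTwo_restrict_fiber hT i).diam_eq_two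

end IsDeltaComposition

lemma exists_dominating_set_of_not_strong {S : Tournament α} (h : ¬ S.Strong) :
    ∃ A : Set α, A.Nonempty ∧ Aᶜ.Nonempty ∧ ∀ a ∈ A, ∀ b ∉ A, S.adj a b = true := by
  simp only [Strong, not_forall] at h
  obtain ⟨u, v, huv⟩ := h
  refine ⟨{z | Relation.ReflTransGen _ z v}, ⟨v, .refl⟩, ⟨u, huv⟩, fun a ha b hb => ?_⟩
  exact (S.adj_or_adj (by rintro rfl; exact hb ha)).resolve_right fun hba => hb (.head hba ha)

lemma DistLeTwo.exists_isDeltaComposition (hT : T.DistLeTwo) (hw : ¬ T.Noncritical w) :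
    ∃ π : V → Fin 3, T.IsDeltaComposition π := by
  classical
  obtain ⟨A₀, ⟨a₀, ha₀⟩, ⟨b₀, hb₀⟩, hA₀⟩ := exists_dominating_set_of_not_strong hw
  set A : Set V := Subtype.val '' A₀
  have ha₀A : (a₀ : V) ∈ A := ⟨a₀, ha₀, rfl⟩
  have hb₀A : (b₀ : V) ∉ A := by rintro ⟨c, hc, hcb⟩; exact hb₀ (Subtype.ext hcb ▸ hc)
  have hAB (a) (ha : a ∈ A) (b) (hbw : b ≠ w) (hbA : b ∉ A) : T.adj a b = true := by
    obtain ⟨a, ha, rfl⟩ := ha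
    exact hA₀ a ha ⟨b, hbw⟩ fun hb => hbA ⟨_, hb, rfl⟩
  -- `b → a` is not an arc, and a path `b → z → a` can only pass through `w`
  have hBwA (a) (ha : a ∈ A) (b) (hbw : b ≠ w) (hbA : b ∉ A) :
      T.adj b w = true ∧ T.adj w a = true := by
    have hab := hAB a ha b hbw hbA
    obtain ⟨z, hbz, hza⟩ :=
      (hT b a (ne_of_adj hab).symm).resolve_left (by simp [adj_eq_false_of_adj hab])
    obtain rfl | hzw := eq_or_ne z w
    · exact ⟨hbz, hza⟩
    by_cases hzA : z ∈ A
    · simp [adj_eq_false_of_adj (hAB z hzA b hbw hbA)] at hbz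
    · simp [adj_eq_false_of_adj (hAB a ha z hzw hzA)] at hza
  refine ⟨fun z => if z = w then 2 else if z ∈ A then 0 else 1, .of_adj ?_ ?_⟩
  · intro i
    fin_cases i
    · exact ⟨a₀, by simp [show (a₀ : V) ≠ w from a₀.2, ha₀A]⟩
    · exact ⟨b₀, by simp [show (b₀ : V) ≠ w from b₀.2, hb₀A]⟩
    · exact ⟨w, by simp⟩
  · intro a b hab
    split_ifs at hab with hbw haw haA hbA haw haA haw haA <;> try exact absurd hab (by decide)
    · exact hbw ▸ (hBwA _ ha₀A a haw haA).1
    · exact haw ▸ (hBwA b hbA _ b₀.2 hb₀A).2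
    · exact hAB a haA b hbw hbA

end Tournament

/-- **Proposition 1.** A strongly connected tournament of diameter `2` has at
most `3` critical vertices; and for `1 ≤ c ≤ 3` it has exactly `c` critical
vertices iff it is obtained from the cyclic triple `Δ` by replacing exactly
`3 - c` of its vertices by strongly connected tournaments of order at least
`3` with diameter `2`. -/
theorem statement_9 {V : Type} [Finite V] (T : Tournament V) (hT : T.Strong)
    (hdiam : T.diam = 2) :
    Nat.card {x : V // ¬ T.Noncritical x} ≤ 3 ∧
    (∀ c : ℕ, 1 ≤ c → c ≤ 3 →
      (Nat.card {x : V // ¬ T.Noncritical x} = c ↔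
        ∃ π : V → Fin 3, Function.Surjective π ∧
          (∀ a b : V, π a ≠ π b → (T.adj a b = true ↔ π b = π a + 1)) ∧
          Nat.card {i : Fin 3 // Nat.card ↥(π ⁻¹' {i}) = 1} = c ∧
          (∀ i : Fin 3, Nat.card ↥(π ⁻¹' {i}) ≠ 1 →
            (3 ≤ Nat.card ↥(π ⁻¹' {i}) ∧ (T.restrict (π ⁻¹' {i})).Strong ∧
              (T.restrict (π ⁻¹' {i})).diam = 2)))) := by
  have hT₂ : T.DistLeTwo := hT.distLeTwo_of_diam_le_two hdiam.le
  have hcomp : Nat.card {x : V // ¬ T.Noncritical x} ≠ 0 →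
      ∃ π : V → Fin 3, T.IsDeltaComposition π := by
    intro h
    obtain ⟨⟨w, hw⟩⟩ := (Nat.card_ne_zero.1 h).1
    exact hT₂.exists_isDeltaComposition hw
  refine ⟨?_, fun c hc _ => ⟨fun hcard => ?_, ?_⟩⟩
  · by_cases h0 : Nat.card {x : V // ¬ T.Noncritical x} = 0
    · omega
    obtain ⟨π, hπ⟩ := hcomp h0
    simpa [hπ.card_critical_eq_card_singleton_fiber] using
      Finite.card_subtype_le fun i : Fin 3 => Nat.card (π ⁻¹' {i}) = 1
  · obtain ⟨π, hπ⟩ := hcomp (by omega)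
    refine ⟨π, hπ.surjective, hπ.adj_iff, hπ.card_critical_eq_card_singleton_fiber ▸ hcard,
      fun i hi => ⟨hπ.three_le_card_fiber hT₂ hi, ?_, hπ.diam_restrict_fiber hT₂ hi⟩⟩
    exact (hπ.distLeTwo_restrict_fiber hT₂ i).strong
  · rintro ⟨π, hsurj, hadj, hcard, -⟩
    exact (Tournament.IsDeltaComposition.card_critical_eq_card_singleton_fiber
      ⟨hsurj, hadj⟩).trans hcard
end

section
/- Let n ≥ 6 and let T be a strongly connected tournament of order n with diameter n−3 belonging to the class H_{n−3,n}, with parameters h_1 = n−4, h_2, h_3, h_4 = 1 as in the standard description of H_{n−3,n} (so the non-critical vertices are w_1,w_2,w_3,w_4 and the critical vertices are v_1,...,v_{n−4}). If h_3 ≤ h_2, then the number of circuits of length 3 in T equals n−2. -/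
/-! The 3-circuits of `T` are the `n - 6` triples `v_t → v_{t+1} → v_{t+2}` of the path and,
for each `i`, the triangle `w_i → v_{h_i - 1} → v_{h_i} → w_i`. No 3-circuit contains two
vertices `w_i → w_j` (so `i < j`): its third vertex `v_a` would need `a < h_j` and `h_i ≤ a`,
while the hypotheses make `h` antitone. A 3-circuit has exactly three cyclic parametrisations,
so listing these `n - 2` vertex sets, each once, counts `c_3(T)`. -/

namespace Tournament

variable {V : Type*} (T : Tournament V)

theorem ne_of_adj_s17 {a b : V} (hab : T.adj a b = true) : a ≠ b := by
  rintro rfl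
  simp [T.irrefl] at hab

theorem adj_iff_not_adj {a b : V} (hne : a ≠ b) : T.adj a b = true ↔ ¬T.adj b a = true := by
  rw [T.compl a b hne]
  cases T.adj b a <;> simp

theorem cyc_eq_add_one {ℓ : ℕ} [NeZero ℓ] (i : Fin ℓ) : cyc i = i + 1 := by
  ext
  rw [Fin.val_add, Fin.val_one', Nat.add_mod_mod]
  unfold cyc
  split_ifs with hi
  · exact (Nat.mod_eq_of_lt hi).symm
  · simp [show i.val + 1 = ℓ by omega]

abbrev Circuit (ℓ : ℕ) :=
  {f : Fin ℓ → V // Function.Injective f ∧ ∀ i : Fin ℓ, T.adj (f i) (f (cyc i)) = true}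

theorem circCount_eq (ℓ : ℕ) : T.circCount ℓ = Nat.card (T.Circuit ℓ) / ℓ := rfl

namespace Circuit

variable {T} {ℓ : ℕ} [NeZero ℓ]

def rotate (f : T.Circuit ℓ) (r : Fin ℓ) : T.Circuit ℓ :=
  ⟨fun j => f.1 (j + r), f.2.1.comp (add_left_injective r), fun i => by
    simpa only [cyc_eq_add_one, add_right_comm] using f.2.2 (i + r)⟩

@[simp]
theorem rotate_apply (f : T.Circuit ℓ) (r j : Fin ℓ) : (f.rotate r).1 j = f.1 (j + r) := rfl

theorem rotate_rotate (f : T.Circuit ℓ) (r s : Fin ℓ) : (f.rotate r).rotate s = f.rotate (s + r) :=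
  Subtype.ext <| funext fun j => by simp [add_assoc]

theorem rotate_zero (f : T.Circuit ℓ) : f.rotate 0 = f :=
  Subtype.ext <| funext fun j => by simp

theorem range_rotate (f : T.Circuit ℓ) (r : Fin ℓ) : Set.range (f.rotate r).1 = Set.range f.1 :=
  (Equiv.addRight r).surjective.range_comp f.1

theorem rotate_injective (f : T.Circuit ℓ) : Function.Injective f.rotate := by
  intro r s hrs
  have h₀ : f.1 (0 + r) = f.1 (0 + s) := congrArg (fun g : T.Circuit ℓ => g.1 0) hrs
  simpa using f.2.1 h₀

def mk₃ {a b c : V} (hab : T.adj a b = true) (hbc : T.adj b c = true) (hca : T.adj c a = true) :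
    T.Circuit 3 :=
  ⟨![a, b, c], by
    have := T.ne_of_adj_s17 hab; have := T.ne_of_adj_s17 hbc; have := T.ne_of_adj_s17 hca
    intro i j hij
    fin_cases i <;> fin_cases j <;> simp at hij <;> first | rfl | tauto,
   fun i => by fin_cases i <;> assumption⟩

theorem range_mk₃ {a b c : V} (hab : T.adj a b = true) (hbc : T.adj b c = true)
    (hca : T.adj c a = true) : Set.range (mk₃ hab hbc hca).1 = {a, b, c} := by
  ext
  simp only [mk₃, Matrix.range_cons, Matrix.range_empty, Set.union_empty, Set.mem_union,
    Set.mem_insert_iff, Set.mem_singleton_iff]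

theorem adj_three (f : T.Circuit 3) :
    T.adj (f.1 0) (f.1 1) = true ∧ T.adj (f.1 1) (f.1 2) = true ∧ T.adj (f.1 2) (f.1 0) = true :=
  ⟨f.2.2 0, f.2.2 1, f.2.2 2⟩

theorem ext_three {f g : T.Circuit 3} (h₀ : f.1 0 = g.1 0) (h₁ : f.1 1 = g.1 1)
    (h₂ : f.1 2 = g.1 2) : f = g :=
  Subtype.ext <| funext fun j => by fin_cases j <;> assumption

end Circuit

theorem circCount_three_eq_card {ι : Type*} [Finite ι] (c : ι → T.Circuit 3)
    (hc : Function.Injective fun e => Set.range (c e).1)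
    (hcover : ∀ f : T.Circuit 3, ∃ e r, c e = f.rotate r) :
    T.circCount 3 = Nat.card ι := by
  have hbij : Function.Bijective fun p : ι × Fin 3 => (c p.1).rotate p.2 := by
    refine ⟨fun ⟨e, r⟩ ⟨e', r'⟩ heq => ?_, fun f => ?_⟩
    · obtain rfl : e = e' := hc <| by
        simpa only [Circuit.range_rotate] using congrArg (fun f : T.Circuit 3 => Set.range f.1) heq
      exact Prod.ext rfl ((c e).rotate_injective heq)
    · obtain ⟨e, r, he⟩ := hcover f
      refine ⟨(e, -r), ?_⟩
      simp only [he, Circuit.rotate_rotate, neg_add_cancel, Circuit.rotate_zero]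
  rw [circCount_eq, ← Nat.card_eq_of_bijective _ hbij, Nat.card_prod, Nat.card_fin,
    Nat.mul_div_cancel _ three_pos]

/-- With 0-based indices: `v` spans a copy of `T_{m-1,m}`, `w` a transitive tournament, and
`w i` dominates exactly the first `h i` path vertices, the other ones dominating it. -/
structure IsPathWithThresholds (T : Tournament V) {m k : ℕ} (v : Fin m → V) (w : Fin k → V)
    (h : Fin k → ℕ) : Prop where
  injective_v : Function.Injective v
  injective_w : Function.Injective w
  v_ne_w : ∀ i j, v i ≠ w j
  cover : ∀ x, (∃ i, v i = x) ∨ ∃ j, w j = x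
  adj_v_v : ∀ i j, T.adj (v i) (v j) = true ↔ j.val = i.val + 1 ∨ j.val + 1 < i.val
  adj_w_w : ∀ i j, T.adj (w i) (w j) = true ↔ i < j
  adj_w_v : ∀ i j, T.adj (w i) (v j) = true ↔ j.val + 1 ≤ h i

namespace IsPathWithThresholds

variable {T} {m k : ℕ} {v : Fin m → V} {w : Fin k → V} {h : Fin k → ℕ}

theorem adj_v_w (H : T.IsPathWithThresholds v w h) (x : Fin m) (i : Fin k) :
    T.adj (v x) (w i) = true ↔ h i ≤ x := by
  rw [T.adj_iff_not_adj (H.v_ne_w x i), H.adj_w_v]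
  omega

def pathCircuit (H : T.IsPathWithThresholds v w h) (t : Fin (m - 2)) : T.Circuit 3 :=
  Circuit.mk₃ (a := v ⟨t, by omega⟩) (b := v ⟨t + 1, by omega⟩) (c := v ⟨t + 2, by omega⟩)
    ((H.adj_v_v _ _).2 (Or.inl rfl)) ((H.adj_v_v _ _).2 (Or.inl rfl))
    ((H.adj_v_v _ _).2 (Or.inr (by simp)))

def thresholdCircuit (H : T.IsPathWithThresholds v w h) (hpos : ∀ i, 0 < h i)
    (hlt : ∀ i, h i < m) (i : Fin k) : T.Circuit 3 :=
  Circuit.mk₃ (a := w i) (b := v ⟨h i - 1, by have := hlt i; omega⟩) (c := v ⟨h i, hlt i⟩)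
    ((H.adj_w_v _ _).2 (by have := hpos i; simp; omega))
    ((H.adj_v_v _ _).2 (Or.inl (by have := hpos i; simp; omega)))
    ((H.adj_v_w _ _).2 le_rfl)

def circuits (H : T.IsPathWithThresholds v w h) (hpos : ∀ i, 0 < h i) (hlt : ∀ i, h i < m) :
    Fin (m - 2) ⊕ Fin k → T.Circuit 3 :=
  Sum.elim H.pathCircuit (H.thresholdCircuit hpos hlt)

theorem range_circuits_injective (H : T.IsPathWithThresholds v w h) (hpos : ∀ i, 0 < h i)
    (hlt : ∀ i, h i < m) : Function.Injective fun e => Set.range (H.circuits hpos hlt e).1 := by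
  have hw_ne_v : ∀ j x, w j ≠ v x := fun j x => (H.v_ne_w x j).symm
  rintro (t | i) (t' | i') hS <;>
    simp only [circuits, Sum.elim_inl, Sum.elim_inr, pathCircuit, thresholdCircuit,
      Circuit.range_mk₃] at hS
  · have h₁ := hS.subset (Set.mem_insert _ _)
    have h₂ := hS.symm.subset (Set.mem_insert _ _)
    simp only [Set.mem_insert_iff, Set.mem_singleton_iff, H.injective_v.eq_iff,
      Fin.ext_iff] at h₁ h₂
    exact congrArg Sum.inl (Fin.ext (by omega))
  · have := hS.symm.subset (Set.mem_insert _ _)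
    simp [hw_ne_v] at this
  · have := hS.subset (Set.mem_insert _ _)
    simp [hw_ne_v] at this
  · have := hS.subset (Set.mem_insert _ _)
    simp only [Set.mem_insert_iff, Set.mem_singleton_iff, H.injective_w.eq_iff, hw_ne_v,
      or_false] at this
    exact congrArg Sum.inr this

theorem false_of_cycle_w_w (H : T.IsPathWithThresholds v w h) (hanti : Antitone h)
    {i j : Fin k} {x : V} (hij : T.adj (w i) (w j) = true) (hjx : T.adj (w j) x = true)
    (hxi : T.adj x (w i) = true) : False := by
  rw [H.adj_w_w] at hij
  rcases H.cover x with ⟨a, rfl⟩ | ⟨l, rfl⟩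
  · rw [H.adj_w_v] at hjx
    rw [H.adj_v_w] at hxi
    have := hanti hij.le
    omega
  · rw [H.adj_w_w] at hjx hxi
    exact (hij.trans hjx).not_gt hxi

theorem thresholdCircuit_eq_of_apply_zero (H : T.IsPathWithThresholds v w h) (hanti : Antitone h)
    (hpos : ∀ i, 0 < h i) (hlt : ∀ i, h i < m) {g : T.Circuit 3} {i : Fin k}
    (hg : g.1 0 = w i) : H.thresholdCircuit hpos hlt i = g := by
  obtain ⟨h₀₁, h₁₂, h₂₀⟩ := g.adj_three
  rw [hg] at h₀₁ h₂₀
  obtain ⟨x, hx⟩ | ⟨j, hj⟩ := H.cover (g.1 1)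
  swap
  · rw [← hj] at h₀₁ h₁₂
    exact (H.false_of_cycle_w_w hanti h₀₁ h₁₂ h₂₀).elim
  obtain ⟨y, hy⟩ | ⟨j, hj⟩ := H.cover (g.1 2)
  swap
  · rw [← hj] at h₁₂ h₂₀
    exact (H.false_of_cycle_w_w hanti h₂₀ h₀₁ h₁₂).elim
  rw [← hx, H.adj_w_v] at h₀₁
  rw [← hx, ← hy, H.adj_v_v] at h₁₂
  rw [← hy, H.adj_v_w] at h₂₀
  refine Circuit.ext_three hg.symm ?_ ?_
  · rw [← hx]
    exact congrArg v (Fin.ext (by simp; omega))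
  · rw [← hy]
    exact congrArg v (Fin.ext (by simp; omega))

theorem exists_pathCircuit_eq_rotate (H : T.IsPathWithThresholds v w h) {f : T.Circuit 3}
    (hf : ∀ j, ∃ x, v x = f.1 j) : ∃ t r, H.pathCircuit t = f.rotate r := by
  choose x hx using hf
  obtain ⟨h₀₁, h₁₂, h₂₀⟩ := f.adj_three
  rw [← hx, ← hx, H.adj_v_v] at h₀₁ h₁₂ h₂₀
  obtain ⟨r, h₁, h₂⟩ : ∃ r : Fin 3, (x (1 + r)).val = x r + 1 ∧ (x (2 + r)).val = x r + 2 := by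
    have : ((x 1).val = x 0 + 1 ∧ (x 2).val = x 0 + 2) ∨
        ((x 2).val = x 1 + 1 ∧ (x 0).val = x 1 + 2) ∨
        ((x 0).val = x 2 + 1 ∧ (x 1).val = x 2 + 2) := by
      omega
    rcases this with h | h | h
    exacts [⟨0, h⟩, ⟨1, h⟩, ⟨2, h⟩]
  refine ⟨⟨x r, by omega⟩, r, Circuit.ext_three ?_ ?_ ?_⟩ <;>
    simp [pathCircuit, Circuit.mk₃, ← hx, H.injective_v.eq_iff, Fin.ext_iff] <;> omega

theorem exists_circuits_eq_rotate (H : T.IsPathWithThresholds v w h) (hanti : Antitone h)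
    (hpos : ∀ i, 0 < h i) (hlt : ∀ i, h i < m) (f : T.Circuit 3) :
    ∃ e r, H.circuits hpos hlt e = f.rotate r := by
  by_cases hfw : ∃ j i, f.1 j = w i
  · obtain ⟨j, i, hji⟩ := hfw
    exact ⟨.inr i, j, H.thresholdCircuit_eq_of_apply_zero hanti hpos hlt (by simpa using hji)⟩
  · simp only [not_exists] at hfw
    have hfv : ∀ j, ∃ x, v x = f.1 j := fun j =>
      (H.cover (f.1 j)).resolve_right fun ⟨i, hi⟩ => hfw j i hi.symm
    obtain ⟨t, r, ht⟩ := H.exists_pathCircuit_eq_rotate hfv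
    exact ⟨.inl t, r, ht⟩

theorem circCount_three (H : T.IsPathWithThresholds v w h) (hanti : Antitone h)
    (hpos : ∀ i, 0 < h i) (hlt : ∀ i, h i < m) : T.circCount 3 = m - 2 + k := by
  rw [T.circCount_three_eq_card _ (H.range_circuits_injective hpos hlt)
    (H.exists_circuits_eq_rotate hanti hpos hlt), Nat.card_sum, Nat.card_fin, Nat.card_fin]

end IsPathWithThresholds

end Tournament

theorem statement_17_general (n : ℕ) {V : Type} (T : Tournament V)
    (v : Fin (n - 4) → V) (w : Fin 4 → V) (h : Fin 4 → ℕ)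
    (hv : Function.Injective v) (hw : Function.Injective w)
    (hvw : ∀ i j, v i ≠ w j)
    (hcover : ∀ x : V, (∃ i, v i = x) ∨ (∃ j, w j = x))
    (hvadj : ∀ i j : Fin (n - 4),
      (T.adj (v i) (v j) = true ↔ (j.val = i.val + 1 ∨ j.val + 1 < i.val)))
    (hwadj : ∀ i j : Fin 4, (T.adj (w i) (w j) = true ↔ i < j))
    (hH : ∀ (i : Fin 4) (k : Fin (n - 4)),
      (T.adj (w i) (v k) = true ↔ k.val + 1 ≤ h i))
    (hh1 : h 0 = n - 5) (hh4 : h 3 = 1)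
    (hh2 : 1 ≤ h 1 ∧ h 1 ≤ n - 5) (hh3 : 1 ≤ h 2 ∧ h 2 ≤ n - 5)
    (hle : h 2 ≤ h 1) :
    T.circCount 3 = n - 2 := by
  have H : T.IsPathWithThresholds v w h := ⟨hv, hw, hvw, hcover, hvadj, hwadj, hH⟩
  have hbounds : ∀ i, 1 ≤ h i ∧ h i ≤ n - 5 := by
    intro i
    fin_cases i <;> simp <;> omega
  have hanti : Antitone h := by
    intro i j hij
    fin_cases i <;> fin_cases j <;> simp at hij ⊢ <;> omega
  rw [H.circCount_three hanti (fun i => (hbounds i).1) (fun i => by have := hbounds i; omega)]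
  omega

/-- A member `T` of the class `H_{n-3,n}` (`n ≥ 6`), given by its standard
description via the critical path `v_1,…,v_{n-4}`, the non-critical vertices
`w_1,w_2,w_3,w_4` and the parameters `h_1 = n-5, h_2, h_3, h_4 = 1`, satisfies
`c_3(T) = n - 2` whenever `h_3 ≤ h_2`. -/
theorem statement_17 (n : ℕ) (hn : 6 ≤ n) {V : Type} (T : Tournament V)
    (hcard : Nat.card V = n) (hT : T.Strong) (hdiam : T.diam = n - 3)
    (v : Fin (n - 4) → V) (w : Fin 4 → V) (h : Fin 4 → ℕ)
    (hv : Function.Injective v) (hw : Function.Injective w)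
    (hvw : ∀ i j, v i ≠ w j)
    (hcover : ∀ x : V, (∃ i, v i = x) ∨ (∃ j, w j = x))
    (hvadj : ∀ i j : Fin (n - 4),
      (T.adj (v i) (v j) = true ↔ (j.val = i.val + 1 ∨ j.val + 1 < i.val)))
    (hwadj : ∀ i j : Fin 4, (T.adj (w i) (w j) = true ↔ i < j))
    (hH : ∀ (i : Fin 4) (k : Fin (n - 4)),
      (T.adj (w i) (v k) = true ↔ k.val + 1 ≤ h i))
    (hh1 : h 0 = n - 5) (hh4 : h 3 = 1)
    (hh2 : 1 ≤ h 1 ∧ h 1 ≤ n - 5) (hh3 : 1 ≤ h 2 ∧ h 2 ≤ n - 5)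
    (hmono : ∀ r s : Fin 4, r ≤ s → h s ≤ h r + 1)
    (hle : h 2 ≤ h 1) :
    T.circCount 3 = n - 2 :=
  statement_17_general n T v w h hv hw hvw hcover hvadj hwadj hH hh1 hh4 hh2 hh3 hle
end
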